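/- Theorem (Frankston–Kahn–Narayanan–Park, spread-measure form): There exists an absolute constant K > 0 such that the following holds for every N ∈ ℕ, every nontrivial monotone property F ⊆ {0,1}^N with L(F) ≥ 2, and every p ∈ (0,1): if there exists a p-spread probability measure ν supported on F, then μ_q(F) ≥ 1/2 where q = min(1, K·p·log L(F)); in particular the critical probability satisfies p_c(F) ≤ K·p·log L(F). -/

import Mathlib

open Finset

/-- The number of coordinates of `x ∈ {0,1}^N` equal to `1`. -/
def wt {N : ℕ} (x : Fin N → Bool) : ℕ := (Finset.univ.filter (fun i => x i = true)).card

open Classical in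
/-- The probability of the property `F ⊆ {0,1}^N` under the product measure `μ_p`
in which each coordinate is `1` independently with probability `p`. -/
noncomputable def mu (N : ℕ) (p : ℝ) (F : Set (Fin N → Bool)) : ℝ :=
  ∑ x : Fin N → Bool,
    if x ∈ F then p ^ wt x * (1 - p) ^ (N - wt x) else 0

/-- A property `F ⊆ {0,1}^N` is monotone if it is closed upwards in the
coordinatewise order. -/
def MonotoneProp {N : ℕ} (F : Set (Fin N → Bool)) : Prop :=
  ∀ x y : Fin N → Bool, x ∈ F → x ≤ y → y ∈ F

open Classical in
/-- `L(F)`: the maximum number of `1`-coordinates of a minimal element of `F`. -/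
noncomputable def Lmax (N : ℕ) (F : Set (Fin N → Bool)) : ℕ :=
  (Finset.univ.filter
    (fun x : Fin N → Bool => x ∈ F ∧ ∀ y : Fin N → Bool, y ∈ F → y ≤ x → y = x)).sup wt

open Classical in
/-- A probability measure `ν` (given by its mass function) supported on `F` is `p`-spread if
`ν({T : S ≤ T}) ≤ 2 p^{|S|}` for every `S ∈ {0,1}^N`. -/
def IsSpread (N : ℕ) (p : ℝ) (ν : (Fin N → Bool) → ℝ) : Prop :=
  ∀ S : Fin N → Bool, ∑ T ∈ Finset.univ.filter (fun T => S ≤ T), ν T ≤ 2 * p ^ wt S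

/-!
Draw `W = W₁ ⊔ ⋯ ⊔ W_m` from `m = ⌊log₂ L⌋ + 1` independent copies of `μ_γ`, `γ = min 1 (32 p)`,
so that `W ∼ μ_q` with `q = 1 - (1 - γ) ^ m ≤ m γ = O(p log L)`. Pushing `ν` to minimal elements
of `F` puts it on sets of weight `< 2 ^ m`. Given `W₁` and `S` in the support of `ν`, the fragment
`T` is a minimal trace `S' \ W₁` (`S'` in the support) below `S \ W₁`; if the later rounds cover
`T`, then `W` covers `S'`. The fragments again form a spread measure, and those of at least half
the maximal weight `b` are rare on average over `W₁`: `W₁` is recovered from `(W₁ ⊔ T, T)`,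
replacing `W₁` by `W₁ ⊔ T` changes `μ_γ` by the factor `(γ / (1 - γ)) ^ |T|`, by minimality `T` is
a lower bound of the members of the support below `W₁ ⊔ T` (at most `2 ^ b` choices), and
spreadness contributes `2 p ^ |T|`. Induction on `m` loses at most half of the mass, so
`μ_q(F) ≥ 1/2`; strict monotonicity of `q ↦ μ_q(F)` then bounds `p_c(F)`.
-/

open Classical

variable {N : ℕ}

section Weight

def trueCoordsIso : (Fin N → Bool) ≃o Finset (Fin N) where
  toFun x := univ.filter (x · = true)
  invFun s i := decide (i ∈ s)
  left_inv x := by funext i; simp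
  right_inv s := by ext i; simp
  map_rel_iff' {x y} := by
    simp only [Equiv.coe_fn_mk, Finset.subset_iff, mem_filter, mem_univ, true_and]
    exact ⟨fun h i => Bool.le_iff_imp.2 (@h i), fun h i => Bool.le_iff_imp.1 (h i)⟩

lemma wt_eq_card (x : Fin N → Bool) : wt x = (trueCoordsIso x).card := rfl

lemma wt_le (x : Fin N → Bool) : wt x ≤ N := by
  simpa [wt_eq_card] using card_le_univ (trueCoordsIso x)

lemma wt_bot : wt (⊥ : Fin N → Bool) = 0 := by
  rw [wt_eq_card, map_bot, bot_eq_empty, card_empty]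

lemma wt_top : wt (⊤ : Fin N → Bool) = N := by
  rw [wt_eq_card, map_top, top_eq_univ, card_univ, Fintype.card_fin]

lemma wt_eq_zero {x : Fin N → Bool} : wt x = 0 ↔ x = ⊥ := by
  rw [wt_eq_card, card_eq_zero, ← bot_eq_empty, ← map_bot trueCoordsIso,
    trueCoordsIso.injective.eq_iff]

lemma wt_sup_of_disjoint {x y : Fin N → Bool} (h : Disjoint x y) :
    wt (x ⊔ y) = wt x + wt y := by
  rw [wt_eq_card, map_sup, sup_eq_union, card_union_of_disjoint (h.map_orderIso trueCoordsIso)]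
  rfl

lemma card_Iic_le (S : Fin N → Bool) : #(univ.filter (· ≤ S)) ≤ 2 ^ wt S := by
  rw [wt_eq_card, ← card_powerset]
  refine card_le_card_of_injOn trueCoordsIso (fun T hT => ?_) trueCoordsIso.injective.injOn
  simpa using (mem_filter.1 hT).2

end Weight

section CubeMass

noncomputable def cubeMass (q : ℝ) (x : Fin N → Bool) : ℝ := q ^ wt x * (1 - q) ^ (N - wt x)

lemma cubeMass_nonneg {q : ℝ} (h0 : 0 ≤ q) (h1 : q ≤ 1) (x : Fin N → Bool) :
    0 ≤ cubeMass q x :=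
  mul_nonneg (pow_nonneg h0 _) (pow_nonneg (sub_nonneg.2 h1) _)

lemma cubeMass_eq_prod (q : ℝ) (x : Fin N → Bool) :
    cubeMass q x = ∏ i, if x i then q else 1 - q := by
  rw [prod_ite, prod_const, prod_const, cubeMass]
  have := card_filter_add_card_filter_not (s := univ) (fun i => x i = true)
  rw [card_univ, Fintype.card_fin] at this
  congr 2
  rw [wt]
  omega

lemma sum_cubeMass (q : ℝ) : ∑ x : Fin N → Bool, cubeMass q x = 1 := by
  simp only [cubeMass_eq_prod]
  rw [← Fintype.prod_sum (fun _ (b : Bool) => if b then q else 1 - q)]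
  simp

-- `μ_{a+b-ab}` is the law of `X ⊔ Y` for independent `X ∼ μ_a`, `Y ∼ μ_b`.
lemma sum_cubeMass_sup_eq (a b : ℝ) (z : Fin N → Bool) :
    ∑ x : Fin N → Bool, ∑ y : Fin N → Bool,
      (if x ⊔ y = z then cubeMass a x * cubeMass b y else 0) = cubeMass (a + b - a * b) z := by
  have hfactor : ∀ x y : Fin N → Bool, (if x ⊔ y = z then cubeMass a x * cubeMass b y else 0) =
      ∏ i, ((if x i then a else 1 - a) * (if y i then b else 1 - b) *
        if (x i || y i) = z i then 1 else 0) := by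
    intro x y
    simp only [prod_mul_distrib, prod_boole, ← cubeMass_eq_prod, mem_univ, true_implies,
      funext_iff, Pi.sup_apply, Bool.sup_eq_bor]
    split_ifs <;> simp
  simp only [hfactor]
  rw [← Fintype.sum_prod_type', ← (Equiv.arrowProdEquivProdArrow _ _ _).sum_comp]
  simp only [Equiv.arrowProdEquivProdArrow_apply]
  rw [← Fintype.prod_sum fun i (u : Bool × Bool) => ((if u.1 then a else 1 - a) *
    (if u.2 then b else 1 - b)) * if (u.1 || u.2) = z i then 1 else 0, cubeMass_eq_prod]
  refine prod_congr rfl fun i _ => ?_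
  cases z i <;> simp [Fintype.sum_prod_type] <;> ring

lemma sum_cubeMass_mul_sup (a b : ℝ) (f : (Fin N → Bool) → ℝ) :
    ∑ z, cubeMass (a + b - a * b) z * f z =
      ∑ x, ∑ y, cubeMass a x * cubeMass b y * f (x ⊔ y) := by
  simp only [← sum_cubeMass_sup_eq, sum_mul, ite_mul, zero_mul]
  rw [sum_comm]
  refine sum_congr rfl fun x _ => ?_
  rw [sum_comm]
  simp

lemma cubeMass_eq_mul_pow_of_disjoint {γ : ℝ} (hγ : γ ≠ 0) {W T : Fin N → Bool}
    (h : Disjoint W T) : cubeMass γ W = cubeMass γ (W ⊔ T) * ((1 - γ) / γ) ^ wt T := by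
  have hwt := wt_sup_of_disjoint h
  have hle := wt_le (W ⊔ T)
  rw [cubeMass, cubeMass, hwt, show N - wt W = N - (wt W + wt T) + wt T by omega, div_pow]
  field_simp
  ring

end CubeMass

section Mu

lemma mu_eq_sum (q : ℝ) (F : Set (Fin N → Bool)) :
    mu N q F = ∑ x, cubeMass q x * if x ∈ F then 1 else 0 := by
  simp [mu, cubeMass, mul_ite]

lemma mu_nonneg {q : ℝ} (h0 : 0 ≤ q) (h1 : q ≤ 1) (F : Set (Fin N → Bool)) :
    0 ≤ mu N q F := by
  rw [mu_eq_sum]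
  exact sum_nonneg fun x _ => mul_nonneg (cubeMass_nonneg h0 h1 x) (by positivity)

lemma mu_univ (q : ℝ) : mu N q Set.univ = 1 := by
  simp [mu_eq_sum, sum_cubeMass]

lemma mu_mono_set {q : ℝ} (h0 : 0 ≤ q) (h1 : q ≤ 1) {F G : Set (Fin N → Bool)} (h : F ⊆ G) :
    mu N q F ≤ mu N q G := by
  simp only [mu_eq_sum]
  refine sum_le_sum fun x _ => mul_le_mul_of_nonneg_left ?_ (cubeMass_nonneg h0 h1 x)
  split_ifs with hxF hxG hxG <;> norm_num
  exact hxG (h hxF)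

lemma cubeMass_le_mu {q : ℝ} (h0 : 0 ≤ q) (h1 : q ≤ 1) {F : Set (Fin N → Bool)}
    {x : Fin N → Bool} (hx : x ∈ F) : cubeMass q x ≤ mu N q F := by
  have := single_le_sum (f := fun y => cubeMass q y * if y ∈ F then 1 else 0)
    (fun y _ => mul_nonneg (cubeMass_nonneg h0 h1 y) (by positivity)) (mem_univ x)
  rw [mu_eq_sum]
  simpa only [hx, if_true, mul_one] using this

lemma mu_add_sub_mul (a b : ℝ) (U : Set (Fin N → Bool)) :
    mu N (a + b - a * b) U = ∑ x, cubeMass a x * mu N b {y | x ⊔ y ∈ U} := by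
  simp only [mu_eq_sum, sum_cubeMass_mul_sup, mul_sum, mul_assoc, Set.mem_ofPred_eq]

lemma ite_mem_le_mu_sup {b : ℝ} (h0 : 0 ≤ b) (h1 : b ≤ 1) {U : Set (Fin N → Bool)}
    (hU : IsUpperSet U) (x : Fin N → Bool) :
    (if x ∈ U then 1 else 0) ≤ mu N b {y | x ⊔ y ∈ U} := by
  split_ifs with hx
  · have : {y | x ⊔ y ∈ U} = Set.univ := Set.eq_univ_of_forall fun y => hU le_sup_left hx
    rw [this, mu_univ]
  · exact mu_nonneg h0 h1 _

lemma exists_add_sub_mul_eq {a c : ℝ} (ha : a < 1) (hac : a ≤ c) (hc : c ≤ 1) :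
    ∃ b, 0 ≤ b ∧ b ≤ 1 ∧ (a < c → 0 < b) ∧ a + b - a * b = c := by
  have h1a : 0 < 1 - a := sub_pos.2 ha
  refine ⟨(c - a) / (1 - a), div_nonneg (by linarith) h1a.le,
    (div_le_one h1a).2 (by linarith), fun h => div_pos (by linarith) h1a, ?_⟩
  field_simp
  ring

lemma mu_mono {U : Set (Fin N → Bool)} (hU : IsUpperSet U) {a c : ℝ} (h0 : 0 ≤ a)
    (hac : a ≤ c) (hc : c ≤ 1) : mu N a U ≤ mu N c U := by
  rcases hac.eq_or_lt with rfl | hlt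
  · rfl
  obtain ⟨b, hb0, hb1, -, rfl⟩ := exists_add_sub_mul_eq (hlt.trans_le hc) hac hc
  rw [mu_add_sub_mul, mu_eq_sum]
  exact sum_le_sum fun x _ => mul_le_mul_of_nonneg_left (ite_mem_le_mu_sup hb0 hb1 hU x)
    (cubeMass_nonneg h0 (by linarith) x)

lemma mu_strictMono {U : Set (Fin N → Bool)} (hU : IsUpperSet U) (hbot : ⊥ ∉ U) (htop : ⊤ ∈ U)
    {a c : ℝ} (h0 : 0 ≤ a) (hac : a < c) (hc : c ≤ 1) : mu N a U < mu N c U := by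
  have ha1 : a < 1 := hac.trans_le hc
  obtain ⟨b, hb0, hb1, hb, rfl⟩ := exists_add_sub_mul_eq ha1 hac.le hc
  rw [mu_add_sub_mul, mu_eq_sum]
  refine sum_lt_sum (fun x _ => mul_le_mul_of_nonneg_left (ite_mem_le_mu_sup hb0 hb1 hU x)
    (cubeMass_nonneg h0 ha1.le x)) ⟨⊥, mem_univ _, ?_⟩
  have hbot_mass : 0 < cubeMass a (⊥ : Fin N → Bool) := by
    simp [cubeMass, wt_bot, pow_pos (sub_pos.2 ha1)]
  have htop_mass : 0 < cubeMass b (⊤ : Fin N → Bool) := by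
    simp [cubeMass, wt_top, pow_pos (hb hac)]
  have : 0 < mu N b {y | ⊥ ⊔ y ∈ U} :=
    htop_mass.trans_le (cubeMass_le_mu hb0 hb1 (by simpa using htop))
  simpa [hbot] using mul_pos hbot_mass this

end Mu

section Fragment

variable {α : Type*}

section Minimal

variable [Preorder α] [WellFoundedLT α] {s : Set α} {a : α}

noncomputable def minimalBelow (s : Set α) (a : α) : α :=
  if h : a ∈ s then (exists_minimal_le_of_wellFoundedLT (· ∈ s) a h).choose else a

lemma minimalBelow_le (ha : a ∈ s) : minimalBelow s a ≤ a := by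
  rw [minimalBelow, dif_pos ha]
  exact (exists_minimal_le_of_wellFoundedLT (· ∈ s) a ha).choose_spec.1

lemma minimal_minimalBelow (ha : a ∈ s) : Minimal (· ∈ s) (minimalBelow s a) := by
  rw [minimalBelow, dif_pos ha]
  exact (exists_minimal_le_of_wellFoundedLT (· ∈ s) a ha).choose_spec.2

end Minimal

variable [GeneralizedBooleanAlgebra α] [WellFoundedLT α] {A : Set α} {W S S' : α}

noncomputable def fragment (A : Set α) (W S : α) : α :=
  minimalBelow ((· \ W) '' A) (S \ W)

lemma fragment_mem_image (hS : S ∈ A) : fragment A W S ∈ (· \ W) '' A :=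
  (minimal_minimalBelow (Set.mem_image_of_mem (· \ W) hS)).prop

lemma fragment_le_sdiff (hS : S ∈ A) : fragment A W S ≤ S \ W :=
  minimalBelow_le (Set.mem_image_of_mem (· \ W) hS)

lemma fragment_le (hS : S ∈ A) : fragment A W S ≤ S :=
  (fragment_le_sdiff hS).trans sdiff_le

lemma disjoint_fragment (hS : S ∈ A) : Disjoint W (fragment A W S) :=
  disjoint_sdiff_self_right.mono_right (fragment_le_sdiff hS)

lemma exists_mem_le_sup_fragment (hS : S ∈ A) : ∃ S' ∈ A, S' ≤ W ⊔ fragment A W S := by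
  obtain ⟨S', hS', heq⟩ := fragment_mem_image (W := W) hS
  exact ⟨S', hS', heq ▸ le_sup_sdiff⟩

/-- Minimality: `S' \ W` is a trace below the fragment, hence equal to it. -/
lemma fragment_le_of_le_sup (hS : S ∈ A) (hS' : S' ∈ A) (h : S' ≤ W ⊔ fragment A W S) :
    fragment A W S ≤ S' :=
  have hmin := minimal_minimalBelow (Set.mem_image_of_mem (· \ W) hS)
  (hmin.le_of_le (Set.mem_image_of_mem (· \ W) hS') (sdiff_le_iff.2 h)).trans sdiff_le

lemma injOn_sup_fragment :
    Set.InjOn (fun q : α × α => (q.1 ⊔ fragment A q.1 q.2, fragment A q.1 q.2, q.2))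
      {q | q.2 ∈ A} := by
  rintro ⟨W₁, S⟩ (hS : S ∈ A) ⟨W₂, S₂⟩ - h
  simp only [Prod.mk.injEq] at h
  obtain ⟨hW, hT, rfl⟩ := h
  refine Prod.ext (show W₁ = W₂ from ?_) rfl
  rw [← (disjoint_fragment (W := W₁) hS).sup_sdiff_cancel_right,
    ← (disjoint_fragment (W := W₂) hS).sup_sdiff_cancel_right, hW, hT]

end Fragment

section Push

variable {α β : Type*} {s : Finset α} {g : α → β} {ν : α → ℝ}

noncomputable def pushOn (s : Finset α) (g : α → β) (ν : α → ℝ) (b : β) : ℝ :=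
  ∑ a ∈ s with g a = b, ν a

lemma pushOn_nonneg (hν : ∀ a, 0 ≤ ν a) (b : β) : 0 ≤ pushOn s g ν b :=
  sum_nonneg fun a _ => hν a

lemma sum_pushOn [Fintype β] : ∑ b, pushOn s g ν b = ∑ a ∈ s, ν a :=
  sum_fiberwise s g ν

lemma sum_filter_pushOn [Fintype β] (P : β → Prop) :
    ∑ b with P b, pushOn s g ν b = ∑ a ∈ s with P (g a), ν a := by
  simp only [pushOn, sum_filter, ite_sum_zero]
  rw [sum_comm]
  refine sum_congr rfl fun a _ => ?_
  rw [sum_eq_single (g a) (fun b _ hb => by simp [Ne.symm hb]) (by simp)]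
  simp

lemma exists_of_pushOn_ne_zero {b : β} (h : pushOn s g ν b ≠ 0) :
    ∃ a ∈ s, ν a ≠ 0 ∧ g a = b := by
  obtain ⟨a, ha, hν⟩ := exists_ne_zero_of_sum_ne_zero h
  exact ⟨a, (mem_filter.1 ha).1, hν, (mem_filter.1 ha).2⟩

end Push

lemma IsSpread.pushOn {p : ℝ} {ν : (Fin N → Bool) → ℝ} (hν : ∀ S, 0 ≤ ν S)
    (hsp : IsSpread N p ν) {s : Finset (Fin N → Bool)} {g : (Fin N → Bool) → Fin N → Bool}
    (hg : ∀ S ∈ s, ν S ≠ 0 → g S ≤ S) : IsSpread N p (pushOn s g ν) := by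
  intro R
  rw [sum_filter_pushOn]
  refine le_trans ?_ (hsp R)
  rw [← sum_filter_ne_zero]
  refine sum_le_sum_of_subset_of_nonneg (fun S hS => ?_) fun S _ _ => hν S
  simp only [mem_filter, mem_univ, true_and] at hS ⊢
  exact hS.1.2.trans (hg S hS.1.1 hS.2)

section Counting

variable {ν : (Fin N → Bool) → ℝ} {p x γ : ℝ} {b k : ℕ}

noncomputable def fragmentCandidates (A : Set (Fin N → Bool)) (W' : Fin N → Bool) :
    Finset (Fin N → Bool) :=
  univ.filter fun T => (A ∩ Set.Iic W').Nonempty ∧ T ∈ lowerBounds (A ∩ Set.Iic W')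

lemma fragment_mem_fragmentCandidates {A : Set (Fin N → Bool)} {W S : Fin N → Bool}
    (hS : S ∈ A) : fragment A W S ∈ fragmentCandidates A (W ⊔ fragment A W S) :=
  mem_filter.2 ⟨mem_univ _, exists_mem_le_sup_fragment hS,
    fun _ hS' => fragment_le_of_le_sup hS hS'.1 hS'.2⟩

lemma card_fragmentCandidates_le {A : Set (Fin N → Bool)} (hb : ∀ S ∈ A, wt S ≤ b)
    (W' : Fin N → Bool) : #(fragmentCandidates A W') ≤ 2 ^ b := by
  by_cases hY : (A ∩ Set.Iic W').Nonempty
  · obtain ⟨S₀, hS₀⟩ := hY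
    calc #(fragmentCandidates A W')
        _ ≤ #(univ.filter (· ≤ S₀)) :=
          card_le_card (monotone_filter_right _ fun _ _ hT => hT.2 hS₀)
        _ ≤ 2 ^ wt S₀ := card_Iic_le S₀
        _ ≤ 2 ^ b := Nat.pow_le_pow_right two_pos (hb S₀ hS₀.1)
  · simp [fragmentCandidates, hY]

lemma IsSpread.pow_wt_mul_sum_le (hsp : IsSpread N p ν) (hp : 0 ≤ p) (hx : 0 ≤ x)
    (hpx : p * x ≤ 1) {T : Fin N → Bool} (hT : k ≤ wt T) :
    x ^ wt T * ∑ S with T ≤ S, ν S ≤ 2 * (p * x) ^ k :=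
  calc x ^ wt T * ∑ S with T ≤ S, ν S
      _ ≤ x ^ wt T * (2 * p ^ wt T) := mul_le_mul_of_nonneg_left (hsp T) (pow_nonneg hx _)
      _ = 2 * (p * x) ^ wt T := by ring
      _ ≤ 2 * (p * x) ^ k :=
        mul_le_mul_of_nonneg_left (pow_le_pow_of_le_one (mul_nonneg hp hx) hpx hT) two_pos.le

/-- `(W, S) ↦ (W ⊔ T, T, S)`, with `T` the fragment, is injective and moves the weight of `W` to
`W ⊔ T` at the price `((1 - γ) / γ) ^ |T|`. -/
lemma sum_cubeMass_mul_sum_fragment_le_sum (hν : ∀ S, 0 ≤ ν S) (hγ0 : 0 < γ) (hγ1 : γ ≤ 1) :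
    ∑ W, cubeMass γ W * ∑ S with k ≤ wt (fragment (Function.support ν) W S), ν S ≤
      ∑ W', cubeMass γ W' * ∑ T ∈ fragmentCandidates (Function.support ν) W' with k ≤ wt T,
        ((1 - γ) / γ) ^ wt T * ∑ S with T ≤ S, ν S := by
  set A := Function.support ν
  set x := (1 - γ) / γ
  have hx : 0 ≤ x := div_nonneg (by linarith) hγ0.le
  let Φ (q : (Fin N → Bool) × (Fin N → Bool)) :
      (Fin N → Bool) × (Fin N → Bool) × (Fin N → Bool) :=
    (q.1 ⊔ fragment A q.1 q.2, fragment A q.1 q.2, q.2)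
  let u (r : (Fin N → Bool) × (Fin N → Bool) × (Fin N → Bool)) : ℝ :=
    cubeMass γ r.1 * (x ^ wt r.2.1 * ν r.2.2)
  let D := univ.filter fun q : (Fin N → Bool) × (Fin N → Bool) =>
    q.2 ∈ A ∧ k ≤ wt (fragment A q.1 q.2)
  let E := univ.filter fun r : (Fin N → Bool) × (Fin N → Bool) × (Fin N → Bool) =>
    r.2.1 ∈ fragmentCandidates A r.1 ∧ k ≤ wt r.2.1 ∧ r.2.1 ≤ r.2.2
  have hmaps : ∀ q ∈ D, Φ q ∈ E := fun q hq => mem_filter.2 ⟨mem_univ _,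
    fragment_mem_fragmentCandidates (mem_filter.1 hq).2.1, (mem_filter.1 hq).2.2,
    fragment_le (mem_filter.1 hq).2.1⟩
  have hinj : Set.InjOn Φ D := injOn_sup_fragment.mono fun q hq => (mem_filter.1 hq).2.1
  calc ∑ W, cubeMass γ W * ∑ S with k ≤ wt (fragment A W S), ν S
      _ = ∑ q ∈ D, cubeMass γ q.1 * ν q.2 := by
        rw [sum_filter, Fintype.sum_prod_type]
        refine sum_congr rfl fun W _ => ?_
        rw [sum_filter, mul_sum]
        refine sum_congr rfl fun S _ => ?_
        by_cases hS : ν S = 0 <;> simp [A, hS]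
      _ = ∑ r ∈ D.image Φ, u r := by
        rw [sum_image hinj]
        refine sum_congr rfl fun q hq => ?_
        rw [cubeMass_eq_mul_pow_of_disjoint hγ0.ne' (disjoint_fragment (mem_filter.1 hq).2.1)]
        ring
      _ ≤ ∑ r ∈ E, u r :=
        sum_le_sum_of_subset_of_nonneg (image_subset_iff.2 hmaps) fun r _ _ =>
          mul_nonneg (cubeMass_nonneg hγ0.le hγ1 _) (mul_nonneg (pow_nonneg hx _) (hν _))
      _ = _ := by
        simp only [E, u, sum_filter, Fintype.sum_prod_type, ite_and]
        refine sum_congr rfl fun W' _ => ?_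
        simp only [fragmentCandidates, sum_filter, mem_filter, mem_univ, true_and]
        rw [mul_sum]
        refine sum_congr rfl fun T _ => ?_
        split_ifs <;> simp [mul_sum]

lemma sum_cubeMass_mul_sum_fragment_le (hν : ∀ S, 0 ≤ ν S) (hsp : IsSpread N p ν)
    (hb : ∀ S ∈ Function.support ν, wt S ≤ b) (hp : 0 ≤ p) (hγ0 : 0 < γ)
    (hγ1 : γ ≤ 1) (hpγ : p * ((1 - γ) / γ) ≤ 1) :
    ∑ W, cubeMass γ W * ∑ S with k ≤ wt (fragment (Function.support ν) W S), ν S ≤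
      2 * 2 ^ b * (p * ((1 - γ) / γ)) ^ k := by
  have hx : 0 ≤ (1 - γ) / γ := div_nonneg (by linarith) hγ0.le
  refine (sum_cubeMass_mul_sum_fragment_le_sum hν hγ0 hγ1).trans ?_
  calc _ ≤ ∑ W', cubeMass γ W' * (2 ^ b * (2 * (p * ((1 - γ) / γ)) ^ k)) := by
        refine sum_le_sum fun W' _ =>
          mul_le_mul_of_nonneg_left ?_ (cubeMass_nonneg hγ0.le hγ1 _)
        refine (sum_le_card_nsmul _ _ _ fun T hT =>
          hsp.pow_wt_mul_sum_le hp hx hpγ (mem_filter.1 hT).2).trans ?_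
        rw [nsmul_eq_mul]
        gcongr
        exact_mod_cast (card_filter_le _ _).trans (card_fragmentCandidates_le hb W')
    _ = 2 * 2 ^ b * (p * ((1 - γ) / γ)) ^ k := by rw [← sum_mul, sum_cubeMass]; ring

end Counting

section Arithmetic

lemma one_sub_one_sub_pow_nonneg {γ : ℝ} (h0 : 0 ≤ γ) (h1 : γ ≤ 1) (m : ℕ) :
    0 ≤ 1 - (1 - γ) ^ m :=
  sub_nonneg.2 (pow_le_one₀ (sub_nonneg.2 h1) (sub_le_self _ h0))

lemma one_sub_one_sub_pow_le_one {γ : ℝ} (h1 : γ ≤ 1) (m : ℕ) : 1 - (1 - γ) ^ m ≤ 1 :=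
  sub_le_self _ (pow_nonneg (sub_nonneg.2 h1) _)

lemma one_sub_one_sub_pow_le {γ : ℝ} (hγ : γ ≤ 2) (m : ℕ) :
    1 - (1 - γ) ^ m ≤ m * γ := by
  have := one_add_mul_le_pow (a := -γ) (by linarith) m
  rw [← sub_eq_add_neg] at this
  linarith

lemma two_mul_two_pow_mul_pow_le {y : ℝ} (hy0 : 0 ≤ y) (hy : y ≤ 1 / 32) (m : ℕ) :
    2 * 2 ^ 2 ^ (m + 1) * y ^ 2 ^ m ≤ (1 / 2) ^ (m + 2) := by
  have hm : m + 3 ≤ 3 * 2 ^ m := by have := @Nat.lt_two_pow_self m; omega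
  calc 2 * 2 ^ 2 ^ (m + 1) * y ^ 2 ^ m
      _ = 2 * (4 * y) ^ 2 ^ m := by rw [pow_succ', pow_mul, mul_pow]; norm_num; ring
      _ ≤ 2 * ((1 / 2) ^ 3) ^ 2 ^ m := by gcongr; linarith
      _ ≤ 2 * (1 / 2) ^ (m + 3) := by
        rw [← pow_mul]
        exact mul_le_mul_of_nonneg_left (pow_le_pow_of_le_one (by norm_num) (by norm_num) hm)
          two_pos.le
      _ = (1 / 2) ^ (m + 2) := by ring

lemma nat_log_two_add_one_le {L : ℕ} (hL : 2 ≤ L) :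
    (Nat.log 2 L + 1 : ℝ) ≤ 3 * Real.log L := by
  have hlog2 := Real.log_two_gt_d9
  have hlogL : Real.log 2 ≤ Real.log L := Real.log_le_log two_pos (by exact_mod_cast hL)
  have hk : (Nat.log 2 L : ℝ) * Real.log 2 ≤ Real.log L := by
    rw [← Real.log_pow]
    exact Real.log_le_log (by positivity) (by exact_mod_cast Nat.pow_log_le_self 2 (by omega))
  nlinarith [Nat.cast_nonneg (α := ℝ) (Nat.log 2 L)]

end Arithmetic

section Round

variable {ν : (Fin N → Bool) → ℝ} {p : ℝ} {k : ℕ} {W : Fin N → Bool}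

noncomputable def roundMeasure (ν : (Fin N → Bool) → ℝ) (k : ℕ) (W : Fin N → Bool) :
    (Fin N → Bool) → ℝ :=
  pushOn (univ.filter fun S => wt (fragment (Function.support ν) W S) < k)
    (fragment (Function.support ν) W) ν

lemma roundMeasure_nonneg (hν : ∀ S, 0 ≤ ν S) (T : Fin N → Bool) :
    0 ≤ roundMeasure ν k W T :=
  pushOn_nonneg hν T

lemma sum_roundMeasure :
    ∑ T, roundMeasure ν k W T =
      ∑ S, ν S - ∑ S with k ≤ wt (fragment (Function.support ν) W S), ν S := by
  rw [roundMeasure, sum_pushOn, eq_sub_iff_add_eq, ← sum_filter_add_sum_filter_not univ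
    (fun S => wt (fragment (Function.support ν) W S) < k)]
  simp only [not_lt]

lemma IsSpread.roundMeasure (hν : ∀ S, 0 ≤ ν S) (hsp : IsSpread N p ν) :
    IsSpread N p (roundMeasure ν k W) :=
  hsp.pushOn hν fun _ _ hS => fragment_le hS

lemma wt_lt_of_mem_support_roundMeasure {T : Fin N → Bool}
    (hT : T ∈ Function.support (roundMeasure ν k W)) : wt T < k := by
  obtain ⟨S, hS, -, rfl⟩ := exists_of_pushOn_ne_zero hT
  exact (mem_filter.1 hS).2

lemma sup_mem_upperClosure_of_mem_upperClosure_roundMeasure {W₂ : Fin N → Bool}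
    (h : W₂ ∈ upperClosure (Function.support (roundMeasure ν k W))) :
    W ⊔ W₂ ∈ upperClosure (Function.support ν) := by
  obtain ⟨T, hT, hTW₂⟩ := mem_upperClosure.1 h
  obtain ⟨S, -, hS, rfl⟩ := exists_of_pushOn_ne_zero hT
  obtain ⟨S', hS', hS'le⟩ :=
    exists_mem_le_sup_fragment (W := W) (show S ∈ Function.support ν from hS)
  exact mem_upperClosure.2 ⟨S', hS', hS'le.trans (sup_le_sup_left hTW₂ W)⟩

end Round

lemma sum_sub_le_sum_cubeMass_mul_sum_roundMeasure {ν : (Fin N → Bool) → ℝ} {p γ : ℝ}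
    (hν : ∀ S, 0 ≤ ν S) (hsp : IsSpread N p ν) (hp : 0 ≤ p) (hγ0 : 0 < γ) (hγ1 : γ ≤ 1)
    (hpγ : p * ((1 - γ) / γ) ≤ 1 / 32) {m : ℕ}
    (hwt : ∀ S ∈ Function.support ν, wt S < 2 ^ (m + 1)) (e : ℝ) :
    ∑ S, ν S - e - (1 / 2) ^ (m + 2) ≤
      ∑ W, cubeMass γ W * (∑ T, roundMeasure ν (2 ^ m) W T - e) := by
  have hbad := sum_cubeMass_mul_sum_fragment_le (k := 2 ^ m) hν hsp
    (fun S hS => (hwt S hS).le) hp hγ0 hγ1 (by linarith)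
  have hsmall := two_mul_two_pow_mul_pow_le
    (mul_nonneg hp (div_nonneg (by linarith) hγ0.le)) hpγ m
  simp only [sum_roundMeasure, mul_sub, sum_sub_distrib, ← sum_mul, sum_cubeMass, one_mul]
  linarith

theorem sum_sub_le_mu_upperClosure {p γ : ℝ} (hp : 0 ≤ p) (hγ0 : 0 < γ) (hγ1 : γ ≤ 1)
    (hpγ : p * ((1 - γ) / γ) ≤ 1 / 32) (m : ℕ) {ν : (Fin N → Bool) → ℝ} (hν : ∀ S, 0 ≤ ν S)
    (hν1 : ∑ S, ν S ≤ 1) (hsp : IsSpread N p ν) (hwt : ∀ S ∈ Function.support ν, wt S < 2 ^ m) :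
    ∑ S, ν S - (1 / 2 - (1 / 2) ^ (m + 1)) ≤
      mu N (1 - (1 - γ) ^ m) (upperClosure (Function.support ν)) := by
  induction m generalizing ν with
  | zero =>
    simp only [pow_zero, zero_add, pow_one, sub_self, sub_zero]
    by_cases hbot : ν ⊥ = 0
    · have hzero : ∀ S, ν S = 0 := fun S => by
        by_contra hS
        exact hS (wt_eq_zero.1 (by simpa using hwt S hS) ▸ hbot)
      simpa [hzero] using mu_nonneg le_rfl zero_le_one _
    · have : (upperClosure (Function.support ν) : Set (Fin N → Bool)) = Set.univ :=
        Set.eq_univ_of_forall fun W => mem_upperClosure.2 ⟨⊥, hbot, bot_le⟩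
      rw [this, mu_univ]
      exact hν1
  | succ m ih =>
    set U := upperClosure (Function.support ν)
    set q := 1 - (1 - γ) ^ m
    have hq0 : 0 ≤ q := one_sub_one_sub_pow_nonneg hγ0.le hγ1 m
    have hq1 : q ≤ 1 := one_sub_one_sub_pow_le_one hγ1 m
    have hround (W : Fin N → Bool) :
        ∑ T, roundMeasure ν (2 ^ m) W T - (1 / 2 - (1 / 2) ^ (m + 1)) ≤
          mu N q {W₂ | W ⊔ W₂ ∈ U} := by
      refine (ih (roundMeasure_nonneg hν) ?_ (hsp.roundMeasure hν)
        fun T hT => wt_lt_of_mem_support_roundMeasure hT).trans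
          (mu_mono_set hq0 hq1 fun W₂ => sup_mem_upperClosure_of_mem_upperClosure_roundMeasure)
      rw [sum_roundMeasure]
      linarith [sum_nonneg fun S (_ : S ∈ univ.filter fun S =>
        2 ^ m ≤ wt (fragment (Function.support ν) W S)) => hν S]
    calc ∑ S, ν S - (1 / 2 - (1 / 2) ^ (m + 1 + 1))
        _ = ∑ S, ν S - (1 / 2 - (1 / 2) ^ (m + 1)) - (1 / 2) ^ (m + 2) := by ring
        _ ≤ ∑ W, cubeMass γ W *
              (∑ T, roundMeasure ν (2 ^ m) W T - (1 / 2 - (1 / 2) ^ (m + 1))) :=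
          sum_sub_le_sum_cubeMass_mul_sum_roundMeasure hν hsp hp hγ0 hγ1 hpγ hwt _
        _ ≤ ∑ W, cubeMass γ W * mu N q {W₂ | W ⊔ W₂ ∈ U} := sum_le_sum fun W _ =>
          mul_le_mul_of_nonneg_left (hround W) (cubeMass_nonneg hγ0.le hγ1 W)
        _ = mu N (1 - (1 - γ) ^ (m + 1)) U := by
          refine (mu_add_sub_mul γ q (U : Set (Fin N → Bool))).symm.trans ?_
          congr 1
          ring

lemma MonotoneProp.isUpperSet {F : Set (Fin N → Bool)} (hF : MonotoneProp F) : IsUpperSet F :=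
  fun x y hxy hx => hF x y hx hxy

lemma wt_le_Lmax {F : Set (Fin N → Bool)} {x : Fin N → Bool} (hx : Minimal (· ∈ F) x) :
    wt x ≤ Lmax N F :=
  le_sup (mem_filter.2 ⟨mem_univ x, hx.prop, fun _ hy hyx => le_antisymm hyx (hx.2 hy hyx)⟩)

lemma half_le_mu_of_isSpread {F : Set (Fin N → Bool)} (hF : IsUpperSet F) {p γ : ℝ}
    (hp : 0 ≤ p) (hγ0 : 0 < γ) (hγ1 : γ ≤ 1) (hpγ : p * ((1 - γ) / γ) ≤ 1 / 32)
    {ν : (Fin N → Bool) → ℝ} (hν : ∀ T, 0 ≤ ν T) (hν1 : ∑ T, ν T = 1)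
    (hνF : ∀ T, ν T ≠ 0 → T ∈ F) (hsp : IsSpread N p ν) :
    1 / 2 ≤ mu N (1 - (1 - γ) ^ (Nat.log 2 (Lmax N F) + 1)) F := by
  set m := Nat.log 2 (Lmax N F) + 1
  set ν₀ := pushOn univ (minimalBelow F) ν
  have hminimal : ∀ T ∈ Function.support ν₀, Minimal (· ∈ F) T := fun T hT => by
    obtain ⟨S, -, hS, rfl⟩ := exists_of_pushOn_ne_zero hT
    exact minimal_minimalBelow (hνF S hS)
  have hwt : ∀ T ∈ Function.support ν₀, wt T < 2 ^ m := fun T hT =>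
    (wt_le_Lmax (hminimal T hT)).trans_lt (Nat.lt_pow_succ_log_self one_lt_two _)
  have hsum : ∑ T, ν₀ T = 1 := by rw [sum_pushOn, hν1]
  have hcover := sum_sub_le_mu_upperClosure hp hγ0 hγ1 hpγ m (pushOn_nonneg hν) hsum.le
    (hsp.pushOn hν fun S _ hS => minimalBelow_le (hνF S hS)) hwt
  have hsub : (upperClosure (Function.support ν₀) : Set (Fin N → Bool)) ⊆ F := fun W hW => by
    obtain ⟨T, hT, hTW⟩ := mem_upperClosure.1 hW
    exact hF hTW (hminimal T hT).prop
  have hpos : (0 : ℝ) < (1 / 2) ^ (m + 1) := by positivity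
  calc 1 / 2 ≤ ∑ T, ν₀ T - (1 / 2 - (1 / 2) ^ (m + 1)) := by rw [hsum]; linarith
    _ ≤ mu N (1 - (1 - γ) ^ m) (upperClosure (Function.support ν₀)) := hcover
    _ ≤ mu N (1 - (1 - γ) ^ m) F := mu_mono_set (one_sub_one_sub_pow_nonneg hγ0.le hγ1 m)
        (one_sub_one_sub_pow_le_one hγ1 m) hsub

lemma half_le_mu_min {F : Set (Fin N → Bool)} (hF : IsUpperSet F) (hL : 2 ≤ Lmax N F)
    {p : ℝ} (hp : 0 < p) {ν : (Fin N → Bool) → ℝ} (hν : ∀ T, 0 ≤ ν T) (hν1 : ∑ T, ν T = 1)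
    (hνF : ∀ T, ν T ≠ 0 → T ∈ F) (hsp : IsSpread N p ν) :
    1 / 2 ≤ mu N (min 1 (96 * p * Real.log (Lmax N F))) F := by
  set γ := min 1 (32 * p)
  have hγ0 : 0 < γ := lt_min one_pos (by linarith)
  have hγ1 : γ ≤ 1 := min_le_left _ _
  have hpγ : p * ((1 - γ) / γ) ≤ 1 / 32 := by
    rcases le_total (32 * p) 1 with h | h
    · rw [show γ = 32 * p from min_eq_right h, mul_div_assoc', div_le_iff₀ (by positivity)]
      nlinarith
    · rw [show γ = 1 from min_eq_left h]
      norm_num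
  set m := Nat.log 2 (Lmax N F) + 1
  have hq : 1 - (1 - γ) ^ m ≤ min 1 (96 * p * Real.log (Lmax N F)) := by
    refine le_min (one_sub_one_sub_pow_le_one hγ1 m) ?_
    calc 1 - (1 - γ) ^ m ≤ m * γ := one_sub_one_sub_pow_le (by linarith) m
      _ ≤ (Nat.log 2 (Lmax N F) + 1 : ℝ) * (32 * p) := by
        push_cast [m]
        exact mul_le_mul_of_nonneg_left (min_le_right _ _) (by positivity)
      _ ≤ 3 * Real.log (Lmax N F) * (32 * p) :=
        mul_le_mul_of_nonneg_right (nat_log_two_add_one_le hL) (by positivity)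
      _ = 96 * p * Real.log (Lmax N F) := by ring
  exact (half_le_mu_of_isSpread hF hp.le hγ0 hγ1 hpγ hν hν1 hνF hsp).trans
    (mu_mono hF (one_sub_one_sub_pow_nonneg hγ0.le hγ1 m) hq (min_le_left _ _))

lemma le_of_mu_eq_half {F : Set (Fin N → Bool)} (hF : IsUpperSet F) (hne : F.Nonempty)
    (hne' : F ≠ Set.univ) {M : ℝ} (hM : 0 ≤ M) (hhalf : 1 / 2 ≤ mu N (min 1 M) F) {pc : ℝ}
    (hpc : pc ∈ Set.Icc (0 : ℝ) 1) (hpc_half : mu N pc F = 1 / 2) : pc ≤ M := by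
  by_contra! hlt
  have hbot : ⊥ ∉ F := fun h => hne' (Set.eq_univ_of_forall fun x => hF bot_le h)
  have htop : ⊤ ∈ F := hF le_top hne.some_mem
  have := mu_strictMono hF hbot htop hM hlt hpc.2
  rw [min_eq_right (hlt.le.trans hpc.2)] at hhalf
  linarith

/-- Frankston–Kahn–Narayanan–Park (spread-measure form): there is an absolute constant `K`
such that if a nontrivial monotone property `F` with `L(F) ≥ 2` supports a `p`-spread
probability measure, then `μ_q(F) ≥ 1/2` for `q = min(1, K·p·log L(F))`; in particular the
critical probability (the unique `p` with `μ_p(F) = 1/2`) satisfies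
`p_c(F) ≤ K·p·log L(F)`. -/
theorem fkns_spread :
    ∃ K : ℝ, 0 < K ∧
      ∀ (N : ℕ) (F : Set (Fin N → Bool)), F.Nonempty → F ≠ Set.univ →
        MonotoneProp F → 2 ≤ Lmax N F →
        ∀ p : ℝ, 0 < p → p < 1 →
        ∀ ν : (Fin N → Bool) → ℝ, (∀ T, 0 ≤ ν T) → (∑ T : Fin N → Bool, ν T) = 1 →
          (∀ T, ν T ≠ 0 → T ∈ F) → IsSpread N p ν →
          1/2 ≤ mu N (min 1 (K * p * Real.log (Lmax N F))) F ∧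
          ∀ pc : ℝ, pc ∈ Set.Icc (0:ℝ) 1 → mu N pc F = 1/2 →
            pc ≤ K * p * Real.log (Lmax N F) := by
  refine ⟨96, by norm_num, fun N F hne hne' hF hL p hp _ ν hν hν1 hνF hsp => ?_⟩
  have hhalf := half_le_mu_min hF.isUpperSet hL hp hν hν1 hνF hsp
  have hlog : 0 ≤ Real.log (Lmax N F) := Real.log_nonneg (by exact_mod_cast one_le_two.trans hL)
  exact ⟨hhalf, fun pc hpc hpc_half =>
    le_of_mu_eq_half hF.isUpperSet hne hne' (by positivity) hhalf hpc hpc_half⟩
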